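/- arXiv:2511.11463 — 7 statements merged into one kernel-verified Lean document; each statement's English description precedes it below -/
import Mathlib

section
/- For positive reals SR, PR, SS defined by SR = (k/2)·log(1 + β·δI^{p/2}), PR = (k/2)·log(1 + β·(I+δI)^p/δI^{p/2}), and SS = (k/2)·log(1 + β·(I+δI)^{p/2}), with k, β, p, I, δI > 0, the steady-state value satisfies √(PR·SR) ≤ SS ≤ (PR + SR)/2. -/
/-!
Put `x = β δI^(p/2)` and `y = β (I + δI)^p / δI^(p/2)`. Then `SR`, `PR` and `SS` are
`(k/2) log (1 + t)` at `t = x`, `y` and `√(x y)`, so the theorem compares `log (1 + √(x y))` with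
the arithmetic and the geometric mean of `log (1 + x)` and `log (1 + y)`. The arithmetic-mean
bound is `(1 + √(x y))² ≤ (1 + x) (1 + y)`. The geometric-mean bound says that
`s ↦ log (1 + exp s)` is log-concave: the second derivative of `s ↦ log (log (1 + exp s))` has
the sign of `log (1 + u) - u` with `u = exp s`.
-/

open Real

lemma log_one_add_exp_pos (s : ℝ) : 0 < log (1 + exp s) :=
  log_pos (by linarith [exp_pos s])

lemma hasDerivAt_log_one_add_exp (s : ℝ) :
    HasDerivAt (fun s => log (1 + exp s)) (exp s / (1 + exp s)) s := by
  simpa using ((hasDerivAt_exp s).const_add 1).log (by positivity)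

lemma hasDerivAt_log_log_one_add_exp (s : ℝ) :
    HasDerivAt (fun s => log (log (1 + exp s)))
      (exp s / ((1 + exp s) * log (1 + exp s))) s := by
  simpa [div_div] using (hasDerivAt_log_one_add_exp s).log (log_one_add_exp_pos s).ne'

lemma hasDerivAt_exp_div_mul_log_one_add_exp (s : ℝ) :
    HasDerivAt (fun s => exp s / ((1 + exp s) * log (1 + exp s)))
      (exp s * (log (1 + exp s) - exp s) / ((1 + exp s) * log (1 + exp s)) ^ 2) s := by
  have hden : HasDerivAt (fun s => (1 + exp s) * log (1 + exp s))
      (exp s * log (1 + exp s) + exp s) s := by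
    refine (((hasDerivAt_exp s).const_add 1).mul (hasDerivAt_log_one_add_exp s)).congr_deriv ?_
    field_simp
  refine ((hasDerivAt_exp s).div hden
    (mul_pos (by positivity) (log_one_add_exp_pos s)).ne').congr_deriv ?_
  ring

theorem strictConcaveOn_log_log_one_add_exp :
    StrictConcaveOn ℝ Set.univ (fun s => log (log (1 + exp s))) := by
  refine strictConcaveOn_univ_of_deriv2_neg
    ((continuous_const.add continuous_exp).log (fun s => (add_pos one_pos (exp_pos s)).ne') |>.log
      (fun s => (log_one_add_exp_pos s).ne')) fun s => ?_
  have hderiv : deriv (fun s => log (log (1 + exp s))) =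
      fun s => exp s / ((1 + exp s) * log (1 + exp s)) :=
    funext fun s => (hasDerivAt_log_log_one_add_exp s).deriv
  rw [Function.iterate_succ_apply, Function.iterate_one, hderiv,
    (hasDerivAt_exp_div_mul_log_one_add_exp s).deriv]
  have hlog_lt : log (1 + exp s) < exp s := by
    linarith [log_lt_sub_one_of_pos (by positivity : 0 < 1 + exp s) (by linarith [exp_pos s])]
  exact div_neg_of_neg_of_pos (mul_neg_of_pos_of_neg (exp_pos s) (by linarith))
    (pow_pos (mul_pos (by positivity) (log_one_add_exp_pos s)) 2)

theorem log_one_add_mul_log_one_add_le_sq {x y : ℝ} (hx : 0 < x) (hy : 0 < y) :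
    log (1 + x) * log (1 + y) ≤ log (1 + √(x * y)) ^ 2 := by
  have hmid := strictConcaveOn_log_log_one_add_exp.concaveOn.2 (Set.mem_univ (log x))
    (Set.mem_univ (log y)) (by norm_num : (0 : ℝ) ≤ 1 / 2) (by norm_num : (0 : ℝ) ≤ 1 / 2)
    (by norm_num)
  have hexp_mid : exp (1 / 2 * log x + 1 / 2 * log y) = √(x * y) := by
    rw [← mul_add, ← log_mul hx.ne' hy.ne', one_div_mul_eq_div,
      exp_half, exp_log (by positivity)]
  simp only [smul_eq_mul, exp_log hx, exp_log hy] at hmid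
  rw [hexp_mid] at hmid
  have hLx := log_pos (by linarith : 1 < 1 + x)
  have hLy := log_pos (by linarith : 1 < 1 + y)
  have hLxy := log_pos (by linarith [sqrt_pos.2 (mul_pos hx hy)] : 1 < 1 + √(x * y))
  rw [← log_le_log_iff (by positivity) (by positivity), log_mul hLx.ne' hLy.ne', log_pow]
  push_cast
  linarith

theorem two_mul_log_one_add_sqrt_le {x y : ℝ} (hx : 0 ≤ x) (hy : 0 ≤ y) :
    2 * log (1 + √(x * y)) ≤ log (1 + x) + log (1 + y) := by
  have hsq : (1 + √(x * y)) ^ 2 ≤ (1 + x) * (1 + y) := by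
    rw [sqrt_mul hx]
    nlinarith [sq_nonneg (√x - √y), sq_sqrt hx, sq_sqrt hy, sqrt_nonneg x, sqrt_nonneg y]
  calc 2 * log (1 + √(x * y)) = log ((1 + √(x * y)) ^ 2) := by rw [log_pow]; push_cast; ring
    _ ≤ log ((1 + x) * (1 + y)) := log_le_log (by positivity) hsq
    _ = log (1 + x) + log (1 + y) := log_mul (by positivity) (by positivity)

theorem adaptation_inequality_general
    (k β p I δI SR PR SS : ℝ)
    (hk : 0 < k) (hβ : 0 < β) (hI : 0 < I) (hδI : 0 < δI)
    (hSR : SR = (k / 2) * Real.log (1 + β * δI ^ (p / 2)))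
    (hPR : PR = (k / 2) * Real.log (1 + β * (I + δI) ^ p / δI ^ (p / 2)))
    (hSS : SS = (k / 2) * Real.log (1 + β * (I + δI) ^ (p / 2))) :
    Real.sqrt (PR * SR) ≤ SS ∧ SS ≤ (PR + SR) / 2 := by
  set x := β * δI ^ (p / 2)
  set y := β * (I + δI) ^ p / δI ^ (p / 2)
  have hx : 0 < x := by positivity
  have hy : 0 < y := by positivity
  have hxy : x * y = (β * (I + δI) ^ (p / 2)) ^ 2 := by
    have : (I + δI) ^ p = ((I + δI) ^ (p / 2)) ^ 2 := by
      rw [← rpow_natCast, ← rpow_mul (by positivity)]; norm_num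
    simp only [x, y, this]
    field_simp
  rw [← sqrt_sq (by positivity : 0 ≤ β * (I + δI) ^ (p / 2)), ← hxy] at hSS
  have hk2 : 0 ≤ k / 2 := by positivity
  subst hSR hPR hSS
  constructor
  · rw [sqrt_le_left (mul_nonneg hk2 (log_nonneg (by linarith [sqrt_nonneg (x * y)])))]
    linarith [mul_le_mul_of_nonneg_left (log_one_add_mul_log_one_add_le_sq hx hy)
      (sq_nonneg (k / 2))]
  · nlinarith [two_mul_log_one_add_sqrt_le hx.le hy.le]

theorem adaptation_inequality
    (k β p I δI SR PR SS : ℝ)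
    (hk : 0 < k) (hβ : 0 < β) (hp : 0 < p) (hI : 0 < I) (hδI : 0 < δI)
    (hSR : SR = (k / 2) * Real.log (1 + β * δI ^ (p / 2)))
    (hPR : PR = (k / 2) * Real.log (1 + β * (I + δI) ^ p / δI ^ (p / 2)))
    (hSS : SS = (k / 2) * Real.log (1 + β * (I + δI) ^ (p / 2))) :
    Real.sqrt (PR * SR) ≤ SS ∧ SS ≤ (PR + SR) / 2 :=
  adaptation_inequality_general k β p I δI SR PR SS hk hβ hI hδI hSR hPR hSS
end

section
/- Let σ_R² > 0, let σ₁², σ₂² ≥ 0 with σ₂² ≥ σ₁², and let m₁, m' > 0 with m' ≥ m₁. Then (1/2)·log((σ_R² + σ₂²/m')/(σ_R² + σ₂²/m₁)) + (1/2)·log((σ_R² + σ₁²/m₁)/(σ_R² + σ₁²/m')) ≤ 0. -/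
open Real

theorem add_mul_mul_add_mul_le {R : Type*} [CommRing R] [PartialOrder R] [IsOrderedRing R]
    {a x y u v : R} (ha : 0 ≤ a) (hxy : x ≤ y) (huv : u ≤ v) :
    (a + y * u) * (a + x * v) ≤ (a + y * v) * (a + x * u) := by
  have hdiff : 0 ≤ a * ((y - x) * (v - u)) :=
    mul_nonneg ha (mul_nonneg (sub_nonneg.2 hxy) (sub_nonneg.2 huv))
  linear_combination hdiff

theorem Real.log_div_add_log_div_nonpos {p q r s : ℝ} (hp : 0 < p) (hq : 0 < q) (hr : 0 < r)
    (hs : 0 < s) (h : p * r ≤ q * s) : log (p / q) + log (r / s) ≤ 0 := by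
  rw [← log_mul (by positivity) (by positivity), div_mul_div_comm]
  exact log_nonpos (by positivity) ((div_le_one (by positivity)).2 h)

theorem highlow_cycle_relax_entropy_nonpos
    (σR2 σ1 σ2 m₁ m' : ℝ)
    (hσR2 : 0 < σR2) (hσ1 : 0 ≤ σ1) (hσ2 : 0 ≤ σ2) (h12 : σ1 ≤ σ2)
    (hm₁ : 0 < m₁) (hm' : 0 < m') (hmm : m₁ ≤ m') :
    (1 / 2) * Real.log ((σR2 + σ2 / m') / (σR2 + σ2 / m₁)) +
      (1 / 2) * Real.log ((σR2 + σ1 / m₁) / (σR2 + σ1 / m')) ≤ 0 := by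
  have hcross : (σR2 + σ2 / m') * (σR2 + σ1 / m₁) ≤ (σR2 + σ2 / m₁) * (σR2 + σ1 / m') := by
    simp only [div_eq_mul_inv]
    exact add_mul_mul_add_mul_le hσR2.le h12 (inv_anti₀ hm₁ hmm)
  have hsum := log_div_add_log_div_nonpos (by positivity) (by positivity) (by positivity)
    (by positivity) hcross
  linarith
end

section
/- Let (a₀,…,a_{N-1}) and (b₀,…,b_{N-1}) be two non-decreasing finite sequences of positive reals. Then for any permutation σ of {0,…,N-1}, ∏ⱼ (aⱼ + bⱼ) ≤ ∏ⱼ (aⱼ + b_{σ(j)}) ≤ ∏ⱼ (aⱼ + b_{N-1-j}). -/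
/-!
Taking logarithms turns both products into assignment sums for the array `log (a i + b k)`.
Since `log` is concave and `a`, `b` are monotone, this array has the Monge property, and after
reversing `b` the opposite one. For a Monge array the diagonal is an optimal assignment:
uncrossing the rows through the largest point a permutation moves never increases the sum and
shrinks the support of the permutation.
-/

open Finset

variable {ι κ M : Type*}

def IsMonge [Preorder ι] [Preorder κ] [Add M] [LE M] (g : ι → κ → M) : Prop :=
  ∀ ⦃i j k l⦄, i ≤ j → k ≤ l → g i k + g j l ≤ g i l + g j k

section OrderedAddMonoid

variable [AddCommMonoid M] [PartialOrder M] [IsOrderedAddMonoid M]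

theorem Fintype.sum_le_sum_of_eq_off_pair [Fintype ι] [DecidableEq ι] {f f' : ι → M} {a b : ι}
    (hab : a ≠ b) (h : ∀ i, i ≠ a → i ≠ b → f i = f' i) (hpair : f a + f b ≤ f' a + f' b) :
    ∑ i, f i ≤ ∑ i, f' i := by
  rw [← sum_sdiff (subset_univ {a, b}), ← sum_sdiff (subset_univ {a, b}), sum_pair hab,
    sum_pair hab]
  gcongr with i hi
  simp only [mem_sdiff, mem_univ, mem_insert, mem_singleton, true_and, not_or] at hi
  exact (h i hi.1 hi.2).le

variable [LinearOrder ι] [Fintype ι]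

theorem IsMonge.sum_le_sum_comp_perm {g : ι → ι → M} (hg : IsMonge g) (σ : Equiv.Perm ι) :
    ∑ i, g i i ≤ ∑ i, g i (σ i) := by
  induction hn : #σ.support using Nat.strong_induction_on generalizing σ with
  | _ n ih =>
  obtain rfl | hσ := eq_or_ne σ 1
  · rfl
  have hne : σ.support.Nonempty :=
    nonempty_iff_ne_empty.2 (mt Equiv.Perm.support_eq_empty_iff.1 hσ)
  -- Uncrossing the rows `σ⁻¹ x` and `x`, for the largest moved point `x`, fixes `x`.
  set x := σ.support.max' hne
  have hx : x ∈ σ.support := max'_mem _ _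
  set w := σ⁻¹ x
  have hw : σ w = x := σ.apply_symm_apply x
  have hwx : w ≠ x := fun h => Equiv.Perm.mem_support.1 hx (h ▸ hw)
  set τ := Equiv.swap x (σ x) * σ
  have hτσ : ∑ i, g i (τ i) ≤ ∑ i, g i (σ i) := by
    refine Fintype.sum_le_sum_of_eq_off_pair hwx (fun i hiw hix => ?_) ?_
    · have hσix : σ i ≠ x := fun h => hiw (σ.injective (h.trans hw.symm))
      rw [Equiv.Perm.mul_apply, Equiv.swap_apply_of_ne_of_ne hσix (σ.injective.ne hix)]
    · have hτw : τ w = σ x := by rw [Equiv.Perm.mul_apply, hw, Equiv.swap_apply_left]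
      have hτx : τ x = x := by rw [Equiv.Perm.mul_apply, Equiv.swap_apply_right]
      rw [hτw, hτx, hw]
      exact hg (le_max' _ w (Equiv.Perm.mem_support.2 (hw.trans_ne hwx.symm)))
        (le_max' _ _ (Equiv.Perm.apply_mem_support.2 hx))
  calc ∑ i, g i i ≤ ∑ i, g i (τ i) :=
        ih _ (hn ▸ Equiv.Perm.card_support_swap_mul (Equiv.Perm.mem_support.1 hx)) τ rfl
    _ ≤ ∑ i, g i (σ i) := hτσ

theorem IsMonge.sum_comp_perm_le_sum {g : ι → ι → M}
    (hg : IsMonge fun i k => OrderDual.toDual (g i k)) (σ : Equiv.Perm ι) : ∑ i, g i (σ i) ≤ ∑ i, g i i :=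
  hg.sum_le_sum_comp_perm σ

end OrderedAddMonoid

theorem Real.log_add_add_log_add_le {x x' y y' : ℝ} (hx : x ≤ x') (hy : y ≤ y')
    (hpos : 0 < x + y) : log (x + y) + log (x' + y') ≤ log (x + y') + log (x' + y) := by
  rw [← log_mul (by linarith) (by linarith), ← log_mul (by linarith) (by linarith)]
  exact log_le_log (mul_pos hpos (by linarith)) (by nlinarith [mul_nonneg (sub_nonneg.2 hx) (sub_nonneg.2 hy)])

section Log

variable [Preorder ι] [Preorder κ] {a : ι → ℝ} {b : κ → ℝ}

theorem isMonge_log_add (ha : Monotone a) (hb : Monotone b) (hpos : ∀ i k, 0 < a i + b k) :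
    IsMonge fun i k => Real.log (a i + b k) :=
  fun i _ k _ hij hkl => Real.log_add_add_log_add_le (ha hij) (hb hkl) (hpos i k)

theorem isMonge_toDual_log_add (ha : Monotone a) (hb : Antitone b) (hpos : ∀ i k, 0 < a i + b k) :
    IsMonge fun i k => OrderDual.toDual (Real.log (a i + b k)) :=
  fun i _ _ l hij hkl => Real.log_add_add_log_add_le (ha hij) (hb hkl) (hpos i l)

end Log

theorem Real.prod_le_prod_of_sum_log_le {s : Finset ι} {f g : ι → ℝ} (hf : ∀ i ∈ s, 0 < f i)
    (hg : ∀ i ∈ s, 0 < g i) (h : ∑ i ∈ s, log (f i) ≤ ∑ i ∈ s, log (g i)) :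
    ∏ i ∈ s, f i ≤ ∏ i ∈ s, g i := by
  rwa [← log_le_log_iff (prod_pos hf) (prod_pos hg), log_prod fun i hi => (hf i hi).ne',
    log_prod fun i hi => (hg i hi).ne']

theorem rearrangement_product_of_sums
    (N : ℕ) (a b : Fin N → ℝ)
    (ha_pos : ∀ j, 0 < a j) (hb_pos : ∀ j, 0 < b j)
    (ha_mono : Monotone a) (hb_mono : Monotone b)
    (σ : Equiv.Perm (Fin N)) :
    (∏ j, (a j + b j)) ≤ (∏ j, (a j + b (σ j))) ∧
      (∏ j, (a j + b (σ j))) ≤ ∏ j, (a j + b j.rev) := by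
  have hpos : ∀ i k, 0 < a i + b k := fun i k => add_pos (ha_pos i) (hb_pos k)
  refine ⟨Real.prod_le_prod_of_sum_log_le (fun _ _ => hpos _ _) (fun _ _ => hpos _ _)
    ((isMonge_log_add ha_mono hb_mono hpos).sum_le_sum_comp_perm σ), ?_⟩
  have hrev := (isMonge_toDual_log_add ha_mono (hb_mono.comp_antitone Fin.rev_anti)
    fun i k => hpos i k.rev).sum_comp_perm_le_sum (σ.trans Fin.revPerm)
  simp only [Function.comp_apply, Equiv.trans_apply, Fin.revPerm_apply, Fin.rev_rev] at hrev
  exact Real.prod_le_prod_of_sum_log_le (fun _ _ => hpos _ _) (fun _ _ => hpos _ _) hrev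
end

section
/- If x₀ ≤ x₁ ≤ … ≤ x_{N-1} and y₀ ≤ y₁ ≤ … ≤ y_{N-1} are positive reals, then [(x₀+y₁)(x₁+y₂)⋯(x_{N-2}+y_{N-1})(x_{N-1}+y₀)] / [(x₁+y₁)(x₂+y₂)⋯(x_{N-1}+y_{N-1})(x₀+y₀)] ≥ 1. -/
open Finset

private lemma swap_ineq (a b c d : ℝ) (hab : a ≤ b) (hcd : c ≤ d) :
    (a + c) * (b + d) ≤ (a + d) * (b + c) := by nlinarith

private lemma key_ineq (n : ℕ) (X Y : ℕ → ℝ)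
    (hX : ∀ i, 0 < X i) (hY : ∀ i, 0 < Y i)
    (hXm : Monotone X) (hYm : Monotone Y) :
    ∏ j ∈ range (n + 1), (X j + Y j) ≤
      (∏ j ∈ range n, (X j + Y (j + 1))) * (X n + Y 0) := by
  induction n with
  | zero => simp
  | succ n ih =>
    have hpos : 0 < ∏ j ∈ range n, (X j + Y (j + 1)) :=
      Finset.prod_pos fun j _ => add_pos (hX j) (hY _)
    have hswap : (X n + Y 0) * (X (n+1) + Y (n+1)) ≤
        (X n + Y (n+1)) * (X (n+1) + Y 0) :=
      swap_ineq _ _ _ _ (hXm (Nat.le_succ n)) (hYm (Nat.zero_le _))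
    calc ∏ j ∈ range (n + 2), (X j + Y j)
        = (∏ j ∈ range (n + 1), (X j + Y j)) * (X (n+1) + Y (n+1)) := by
          rw [prod_range_succ]
      _ ≤ ((∏ j ∈ range n, (X j + Y (j + 1))) * (X n + Y 0)) * (X (n+1) + Y (n+1)) := by
          apply mul_le_mul_of_nonneg_right ih (le_of_lt (add_pos (hX _) (hY _)))
      _ = (∏ j ∈ range n, (X j + Y (j + 1))) * ((X n + Y 0) * (X (n+1) + Y (n+1))) := by
          ring
      _ ≤ (∏ j ∈ range n, (X j + Y (j + 1))) * ((X n + Y (n+1)) * (X (n+1) + Y 0)) := by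
          apply mul_le_mul_of_nonneg_left hswap (le_of_lt hpos)
      _ = (∏ j ∈ range (n + 1), (X j + Y (j + 1))) * (X (n+1) + Y 0) := by
          rw [prod_range_succ]; ring

theorem monotone_staircase_cycle_ratio_ge_one
    (N : ℕ) [NeZero N] (x y : Fin N → ℝ)
    (hx_pos : ∀ j, 0 < x j) (hy_pos : ∀ j, 0 < y j)
    (hx_mono : Monotone x) (hy_mono : Monotone y) :
    1 ≤ (∏ j, (x j + y (j + 1))) / ∏ j, (x j + y j) := by
  obtain ⟨m, rfl⟩ : ∃ m, N = m + 1 := ⟨N - 1, (Nat.succ_pred_eq_of_pos (Nat.pos_of_ne_zero (NeZero.ne N))).symm⟩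
  set X : ℕ → ℝ := fun i => x ⟨min i m, by omega⟩ with hXdef
  set Y : ℕ → ℝ := fun i => y ⟨min i m, by omega⟩ with hYdef
  have hXp : ∀ i, 0 < X i := fun i => hx_pos _
  have hYp : ∀ i, 0 < Y i := fun i => hy_pos _
  have hXm : Monotone X := fun i j hij => hx_mono (by simp [Fin.le_def]; omega)
  have hYm : Monotone Y := fun i j hij => hy_mono (by simp [Fin.le_def]; omega)
  have hXeq : ∀ j : Fin (m+1), X j.val = x j := by
    intro j
    have : min j.val m = j.val := by omega
    simp [hXdef, this]
  have hYeq : ∀ j : Fin (m+1), Y j.val = y j := by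
    intro j
    have : min j.val m = j.val := by omega
    simp [hYdef, this]
  have hB : (∏ j, (x j + y j)) = ∏ j ∈ range (m+1), (X j + Y j) := by
    rw [← Fin.prod_univ_eq_prod_range]
    exact Finset.prod_congr rfl fun j _ => by rw [hXeq, hYeq]
  have hA : (∏ j, (x j + y (j + 1))) =
      (∏ j ∈ range m, (X j + Y (j + 1))) * (X m + Y 0) := by
    have : (∏ j, (x j + y (j + 1))) =
        ∏ i ∈ range (m+1), (x ⟨min i m, by omega⟩ + y (⟨min i m, by omega⟩ + 1)) := by
      rw [← Fin.prod_univ_eq_prod_range]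
      apply Finset.prod_congr rfl
      intro j _
      congr 1 <;> [skip; congr 1] <;>
        · congr 1; apply Fin.ext; simp; omega
    rw [this, prod_range_succ]
    congr 1
    · apply Finset.prod_congr rfl
      intro i hi
      have hi' : i < m := mem_range.mp hi
      have h1 : (min i m) = i := by omega
      have h2 : ((⟨min i m, by omega⟩ : Fin (m+1)) + 1) = ⟨i + 1, by omega⟩ := by
        apply Fin.ext
        simp [Fin.add_def, h1, Nat.mod_eq_of_lt (by omega : i + 1 < m + 1)]
      rw [h2]
      have h3 : X i = x ⟨min i m, by omega⟩ := rfl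
      have h4 : Y (i+1) = y ⟨i+1, by omega⟩ := by
        simp [hYdef]
        congr 1
        apply Fin.ext
        simp; omega
      rw [h3, h4]
    · have h1 : min m m = m := by omega
      have h2 : ((⟨min m m, by omega⟩ : Fin (m+1)) + 1) = ⟨0, by omega⟩ := by
        apply Fin.ext
        simp [Fin.add_def, h1]
      rw [h2]
      have h3 : X m = x ⟨min m m, by omega⟩ := rfl
      have h4 : Y 0 = y ⟨0, by omega⟩ := by
        simp [hYdef]
      rw [h3, h4]
  have hBpos : 0 < ∏ j, (x j + y j) :=
    Finset.prod_pos fun j _ => add_pos (hx_pos j) (hy_pos j)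
  rw [le_div_iff₀ hBpos, one_mul, hA, hB]
  exact key_ineq m X Y hXp hYp hXm hYm
end

section
/- Define H(μ, m) = (1/2)·log(σ_R² + σ²(μ)/m) for m > 0, where σ_R² > 0 is constant and σ² : ℝ → ℝ is a differentiable, non-negative, non-decreasing function. Then the mixed partial derivative satisfies ∂²H/∂m∂μ = −(σ_R² / (2·m²·(σ_R² + σ²(μ)/m)²))·(dσ²/dμ) ≤ 0 for all μ and all m > 0. -/
/-!
Differentiating `(1/2) log (c + s/m)` in `m` gives `-s / (2 m² (c + s/m))`. Differentiating this
in `μ`, with `s = σ²(μ)`, the terms in `σ²(μ)` cancel and leave `-c σ²'(μ) / (2 m² (c + σ²(μ)/m)²)`,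
whose sign is that of `-σ²'(μ) ≤ 0` since `σ²` is monotone.
-/

theorem hasDerivAt_half_log_const_add_div {c s m : ℝ} (hm : m ≠ 0) (hD : c + s / m ≠ 0) :
    HasDerivAt (fun m' => (1 / 2) * Real.log (c + s / m')) (-s / (2 * m ^ 2 * (c + s / m))) m := by
  have hinner : HasDerivAt (fun m' => c + s / m') (s * -(m ^ 2)⁻¹) m := by
    simpa [div_eq_mul_inv] using ((hasDerivAt_inv hm).const_mul s).const_add c
  refine ((hinner.log hD).const_mul (1 / 2 : ℝ)).congr_deriv ?_
  field_simp

theorem HasDerivAt.neg_div_const_add_div {f : ℝ → ℝ} {f' c m x : ℝ} (hf : HasDerivAt f f' x)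
    (hm : m ≠ 0) (hD : c + f x / m ≠ 0) :
    HasDerivAt (fun y => -f y / (2 * m ^ 2 * (c + f y / m)))
      (-(c / (2 * m ^ 2 * (c + f x / m) ^ 2)) * f') x := by
  have hden : HasDerivAt (fun y => 2 * m ^ 2 * (c + f y / m)) (2 * m ^ 2 * (f' / m)) x :=
    ((hf.div_const m).const_add c).const_mul (2 * m ^ 2)
  refine (hf.neg.div hden (by positivity)).congr_deriv ?_
  simp only [Pi.neg_apply]
  field_simp
  ring

theorem mixed_partial_of_sensory_entropy_nonpos
    (σR2 : ℝ) (hσR2 : 0 < σR2)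
    (σ2 : ℝ → ℝ) (hdiff : Differentiable ℝ σ2)
    (hnonneg : ∀ μ, 0 ≤ σ2 μ) (hmono : Monotone σ2)
    (H : ℝ → ℝ → ℝ)
    (hH : H = fun μ m => (1 / 2) * Real.log (σR2 + σ2 μ / m))
    (μ m : ℝ) (hm : 0 < m) :
    deriv (fun μ' => deriv (fun m' => H μ' m') m) μ =
        -(σR2 / (2 * m ^ 2 * (σR2 + σ2 μ / m) ^ 2)) * deriv σ2 μ ∧
      deriv (fun μ' => deriv (fun m' => H μ' m') m) μ ≤ 0 := by
  subst hH
  have hD : ∀ μ', σR2 + σ2 μ' / m ≠ 0 := fun μ' => by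
    have := hnonneg μ'
    positivity
  have hinner : (fun μ' => deriv (fun m' => (1 / 2) * Real.log (σR2 + σ2 μ' / m')) m) =
      fun μ' => -σ2 μ' / (2 * m ^ 2 * (σR2 + σ2 μ' / m)) :=
    funext fun μ' => (hasDerivAt_half_log_const_add_div hm.ne' (hD μ')).deriv
  have hmixed : deriv (fun μ' => deriv (fun m' => (1 / 2) * Real.log (σR2 + σ2 μ' / m')) m) μ =
      -(σR2 / (2 * m ^ 2 * (σR2 + σ2 μ / m) ^ 2)) * deriv σ2 μ := by
    rw [hinner]
    exact ((hdiff μ).hasDerivAt.neg_div_const_add_div hm.ne' (hD μ)).deriv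
  refine ⟨hmixed, hmixed ▸ mul_nonpos_of_nonpos_of_nonneg ?_ hmono.deriv_nonneg⟩
  exact neg_nonpos.mpr (by positivity)
end

section
/- Let x₀,…,x_N and y₀,…,y_N be positive reals. Define R_{N+1} = [∏_{j=0}^{N-1}(x_j + y_{j+1})·(x_N + y₀)] / [∏_{j=1}^{N}(x_j + y_j)·(x₀ + y₀)]. Suppose R_N := [∏_{j=0}^{N-2}(x_j + y_{j+1})·(x_{N-1} + y₀)] / [∏_{j=1}^{N-1}(x_j + y_j)·(x₀ + y₀)] ≥ 1, and suppose (y_N − y₀)·(x_N − x_{N-1}) ≥ 0. Then R_{N+1} = R_N · [(x_{N-1}+y_N)(x_N+y₀)] / [(x_N+y_N)(x_{N-1}+y₀)] ≥ 1. -/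
/-!
Closing the cycle one transition later replaces the factor `x_{N-1} + y₀` of the numerator of
`R_N` by `(x_{N-1} + y_N)(x_N + y₀)` and multiplies the denominator by `x_N + y_N`. The resulting
correction factor is at least `1` by the two-sequence rearrangement inequality, because
realizability makes `x` and `y` move in the same direction between the two endpoints.
-/

open Finset

/-- `cycleRatio x y n` is the paper's `R_{n+1}`. -/
def cycleRatio {K : Type*} [Field K] (x y : ℕ → K) (n : ℕ) : K :=
  ((∏ j ∈ range n, (x j + y (j + 1))) * (x n + y 0)) /
    ((∏ j ∈ Icc 1 n, (x j + y j)) * (x 0 + y 0))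

theorem cycleRatio_succ {K : Type*} [Field K] (x y : ℕ → K) (n : ℕ) (h : x n + y 0 ≠ 0) :
    cycleRatio x y (n + 1) = cycleRatio x y n * ((x n + y (n + 1)) * (x (n + 1) + y 0)) /
      ((x (n + 1) + y (n + 1)) * (x n + y 0)) := by
  unfold cycleRatio
  rw [prod_range_succ, prod_Icc_succ_top (Nat.le_add_left 1 n)]
  field_simp

theorem sub_mul_sub_nonneg_of_comonotone {α : Type*} [Ring α] [LinearOrder α]
    [IsStrictOrderedRing α] {a b c d : α} (h₁ : c ≤ d → a ≤ b) (h₂ : d < c → b < a) :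
    0 ≤ (d - c) * (b - a) := by
  rcases le_or_gt c d with hcd | hdc
  · exact mul_nonneg (sub_nonneg.2 hcd) (sub_nonneg.2 (h₁ hcd))
  · exact mul_nonneg_of_nonpos_of_nonpos (sub_nonpos.2 hdc.le) (sub_nonpos.2 (h₂ hdc).le)

theorem add_mul_add_le_add_mul_add {α : Type*} [CommRing α] [PartialOrder α]
    [IsOrderedRing α] {a a' b b' : α} (h : 0 ≤ (b' - b) * (a' - a)) :
    (a' + b') * (a + b) ≤ (a + b') * (a' + b) := by
  have hdiff : (a + b') * (a' + b) - (a' + b') * (a + b) = (b' - b) * (a' - a) := by ring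
  exact sub_nonneg.1 (hdiff ▸ h)

theorem one_le_mul_div_of_le {α : Type*} [Field α] [LinearOrder α] [IsStrictOrderedRing α]
    {r a b : α} (hr : 1 ≤ r) (hb : 0 < b) (hba : b ≤ a) :
    1 ≤ r * a / b :=
  (one_le_div hb).2 (hba.trans (le_mul_of_one_le_left (hb.le.trans hba) hr))

theorem inductive_step_cycle_ratio
    (N : ℕ) (hN : 1 ≤ N) (x y : ℕ → ℝ)
    (hx : ∀ j, 0 < x j) (hy : ∀ j, 0 < y j)
    (RN RN1 : ℝ)
    (hRN : RN = ((∏ j ∈ Finset.range (N - 1), (x j + y (j + 1))) * (x (N - 1) + y 0)) /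
      ((∏ j ∈ Finset.Icc 1 (N - 1), (x j + y j)) * (x 0 + y 0)))
    (hRN1 : RN1 = ((∏ j ∈ Finset.range N, (x j + y (j + 1))) * (x N + y 0)) /
      ((∏ j ∈ Finset.Icc 1 N, (x j + y j)) * (x 0 + y 0)))
    (hRN_ge : 1 ≤ RN)
    (hcompat₁ : y 0 ≤ y N → x (N - 1) ≤ x N)
    (hcompat₂ : y N < y 0 → x N < x (N - 1)) :
    RN1 = RN * ((x (N - 1) + y N) * (x N + y 0)) / ((x N + y N) * (x (N - 1) + y 0)) ∧
      1 ≤ RN1 := by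
  have hpos : ∀ i k, 0 < x i + y k := fun i k => add_pos (hx i) (hy k)
  have hstep := cycleRatio_succ x y (N - 1) (hpos _ _).ne'
  rw [Nat.sub_add_cancel hN] at hstep
  have hratio : RN1 = RN * ((x (N - 1) + y N) * (x N + y 0)) /
      ((x N + y N) * (x (N - 1) + y 0)) := by
    rw [hRN1, hRN]
    exact hstep
  have hfactor : (x N + y N) * (x (N - 1) + y 0) ≤ (x (N - 1) + y N) * (x N + y 0) :=
    add_mul_add_le_add_mul_add (sub_mul_sub_nonneg_of_comonotone hcompat₁ hcompat₂)
  refine ⟨hratio, ?_⟩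
  rw [hratio]
  exact one_le_mul_div_of_le hRN_ge (mul_pos (hpos _ _) (hpos _ _)) hfactor
end

section
/- Let σ_R² > 0, and let y_j = σ_j²/σ_R² > 0 and x_j = m_j > 0 for j = 0,…,N−1 with x_j and y_j similarly ordered as multisets: there is a single permutation arranging both in non-decreasing order simultaneously (y_j and x_j are paired size-wise, i.e. y_i ≤ y_j ⟺ x_i ≤ x_j). Then ∏_{j=0}^{N-1}(x_{j-1} + y_j) ≥ ∏_{j=0}^{N-1}(x_j + y_j), where indices are taken mod N, i.e. the cyclic shifted pairing never produces a smaller product than the aligned pairing. -/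
/-!
Transposing two entries of a permutation `σ` changes only two factors of `∏ i, (x (σ i) + y i)`,
and by the binary rearrangement inequality `(a + c) * (b + d) ≤ (b + c) * (a + d)` for `a ≤ b`,
`c ≤ d` the product does not increase when the transposition puts an index `a` that is
lexicographically maximal for `(y, x)` on the support back in place. Such transpositions shrink the
support, so every permuted pairing dominates the aligned one; the cyclic shift is one of them.
-/

open Finset Equiv

section Rearrangement

variable {ι R : Type*} [Fintype ι] [DecidableEq ι]

lemma add_mul_add_le_add_mul_add_s19 [CommRing R] [PartialOrder R] [IsOrderedRing R] {a b c d : R}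
    (hab : a ≤ b) (hcd : c ≤ d) : (a + c) * (b + d) ≤ (b + c) * (a + d) := by
  linear_combination mul_add_mul_le_mul_add_mul hab hcd

lemma prod_le_prod_of_eq_off_pair [CommSemiring R] [PartialOrder R] [IsOrderedRing R]
    {f g : ι → R} {a b : ι} (hab : a ≠ b) (hg : ∀ i, 0 ≤ g i)
    (hpair : f a * f b ≤ g a * g b) (heq : ∀ i, i ≠ a → i ≠ b → f i = g i) :
    ∏ i, f i ≤ ∏ i, g i := by
  rw [← prod_mul_prod_compl {a, b}, ← prod_mul_prod_compl {a, b} g, prod_pair hab, prod_pair hab]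
  have hcompl : ∏ i ∈ ({a, b} : Finset ι)ᶜ, f i = ∏ i ∈ ({a, b} : Finset ι)ᶜ, g i :=
    prod_congr rfl fun i hi => by
      simp only [mem_compl, mem_insert, mem_singleton, not_or] at hi
      exact heq i hi.1 hi.2
  rw [hcompl]
  exact mul_le_mul_of_nonneg_right hpair (prod_nonneg fun i _ => hg i)

variable [CommRing R] [LinearOrder R] [IsStrictOrderedRing R] {x y : ι → R}

lemma prod_add_comp_swap_mul_le_prod_add_comp (hpos : ∀ i j, 0 ≤ x i + y j) {σ : Perm ι} {a : ι}
    (ha : σ a ≠ a) (hx : x (σ a) ≤ x a) (hy : y (σ.symm a) ≤ y a) :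
    ∏ i, (x ((swap a (σ a) * σ) i) + y i) ≤ ∏ i, (x (σ i) + y i) := by
  have hab : a ≠ σ.symm a := fun h => ha (σ.eq_symm_apply.mp h)
  refine prod_le_prod_of_eq_off_pair hab (fun i => hpos _ _) ?_ ?_
  · simp only [Perm.mul_apply, swap_apply_left, apply_symm_apply, swap_apply_right]
    linarith [add_mul_add_le_add_mul_add_s19 hx hy]
  · intro i hia hib
    rw [Perm.mul_apply, swap_apply_of_ne_of_ne (fun h => hib (by rw [← h, symm_apply_apply]))
      (σ.injective.ne hia)]

theorem Monovary.prod_add_le_prod_comp_perm_add (hxy : Monovary x y)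
    (hpos : ∀ i j, 0 ≤ x i + y j) (σ : Perm ι) :
    ∏ i, (x i + y i) ≤ ∏ i, (x (σ i) + y i) := by
  induction hcard : #σ.support using Nat.strong_induction_on generalizing σ with
  | _ n ih =>
    obtain rfl | hσ := eq_or_ne σ 1
    · simp
    obtain ⟨a, ha, hmax⟩ := exists_max_image σ.support (fun i => toLex (y i, x i))
      (nonempty_iff_ne_empty.mpr (by rwa [Ne, Perm.support_eq_empty_iff]))
    have hσa : σ a ≠ a := Perm.mem_support.mp ha
    have hσa_mem : σ a ∈ σ.support := Perm.apply_mem_support.mpr ha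
    have hσinv_mem : σ.symm a ∈ σ.support := Perm.apply_mem_support.mp (by rwa [apply_symm_apply])
    have hx : x (σ a) ≤ x a := by
      rcases Prod.Lex.toLex_le_toLex.mp (hmax _ hσa_mem) with hlt | heq
      · exact hxy hlt
      · exact heq.2
    have hy : y (σ.symm a) ≤ y a := by
      rcases Prod.Lex.toLex_le_toLex.mp (hmax _ hσinv_mem) with hlt | heq
      · exact hlt.le
      · exact heq.1.le
    calc ∏ i, (x i + y i)
        ≤ ∏ i, (x ((swap a (σ a) * σ) i) + y i) :=
          ih _ (hcard ▸ Perm.card_support_swap_mul hσa) _ rfl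
      _ ≤ ∏ i, (x (σ i) + y i) := prod_add_comp_swap_mul_le_prod_add_comp hpos hσa hx hy

end Rearrangement

theorem aligned_pairing_minimizes_cyclic
    (N : ℕ) [NeZero N] (σR2 : ℝ) (hσR2 : 0 < σR2)
    (σsq : Fin N → ℝ) (hσsq : ∀ j, 0 < σsq j)
    (x y : Fin N → ℝ)
    (hy : y = fun j => σsq j / σR2)
    (hx : ∀ j, 0 < x j)
    (hord : ∀ i j, y i ≤ y j ↔ x i ≤ x j) :
    (∏ j, (x j + y j)) ≤ ∏ j, (x (j - 1) + y j) := by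
  have hy_pos : ∀ j, 0 < y j := fun j => by rw [hy]; exact div_pos (hσsq j) hσR2
  have hxy : Monovary x y := fun i j hij => (not_le.mp ((hord j i).not.mp hij.not_ge)).le
  exact hxy.prod_add_le_prod_comp_perm_add (fun i j => (add_pos (hx i) (hy_pos j)).le)
    (Equiv.subRight 1)
end
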